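/- For all q > 0, G(q) = I_1(q) K_1(q) satisfies 0 < G(q) < 1/2. -/

import Mathlib

open Real Filter Set

/-- Modified Bessel function of the first kind, order 1 (power series). -/
noncomputable def besselI1 (x : ℝ) : ℝ :=
  ∑' k : ℕ, (x / 2) ^ (2 * k + 1) / ((Nat.factorial k : ℝ) * (Nat.factorial (k + 1) : ℝ))

/-- Modified Bessel function of the second kind, order 1 (integral representation). -/
noncomputable def besselK1 (x : ℝ) : ℝ :=
  ∫ t in Set.Ioi (0 : ℝ), Real.exp (-x * Real.cosh t) * Real.cosh t

/-- Diagonal Green's function `G(q) = I₁(q) K₁(q)`. -/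
noncomputable def Gdiag (q : ℝ) : ℝ := besselI1 q * besselK1 q

/-- Green's function of the radial Helmholtz operator:
`G(r,ξ) = I₁(min(r,ξ)) K₁(max(r,ξ))`. -/
noncomputable def Grad (r ξ : ℝ) : ℝ := besselI1 (min r ξ) * besselK1 (max r ξ)

/-!
Both factors of `G(q) = I₁(q) K₁(q)` are positive. For the upper bound, the series of `I₁` is
dominated termwise by that of `sinh / 2`, because `(2k+1)! ≤ 4ᵏ k! (k+1)!`. In the integral of
`K₁`, split at `t = arsinh 1`: before it `e^{-q cosh t} ≤ e^{-q}`, after it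
`e^{-q cosh t} ≤ e^{-q sinh t}`, and both pieces integrate in closed form, so
`K₁(q) ≤ e^{-q} (1 + 1/q)`. Hence `G(q) ≤ (1 - e^{-2q}) (1 + q) / (4q)`, and this is `< 1/2`
exactly when `1 - q < (1 + q) e^{-2q}`, which holds because the difference of the two sides
vanishes at `0` and has derivative `1 - (1 + 2t) e^{-2t} > 0`.
-/

open MeasureTheory
open scoped Nat Topology

lemma exp_neg_mul_cosh_le_exp_neg_mul_sinh {x : ℝ} (hx : 0 ≤ x) (t : ℝ) :
    exp (-x * cosh t) ≤ exp (-x * sinh t) := by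
  rw [exp_le_exp, neg_mul, neg_mul, neg_le_neg_iff]
  exact mul_le_mul_of_nonneg_left (sinh_lt_cosh t).le hx

lemma hasDerivAt_neg_exp_neg_mul_sinh_div {x : ℝ} (hx : x ≠ 0) (t : ℝ) :
    HasDerivAt (fun t => -exp (-x * sinh t) / x) (exp (-x * sinh t) * cosh t) t := by
  have h : HasDerivAt (fun t => -exp (-x * sinh t) / x)
      (-(exp (-x * sinh t) * (-x * cosh t)) / x) t :=
    (((hasDerivAt_sinh t).const_mul (-x)).exp.neg).div_const x
  convert h using 1
  field_simp

lemma tendsto_neg_exp_neg_mul_sinh_div_atTop {x : ℝ} (hx : 0 < x) :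
    Tendsto (fun t => -exp (-x * sinh t) / x) atTop (𝓝 0) := by
  have hsinh : Tendsto sinh atTop atTop :=
    tendsto_atTop_mono' _ ((eventually_ge_atTop 0).mono fun _ => self_le_sinh_iff.2) tendsto_id
  have hexp : Tendsto (fun t => exp (-x * sinh t)) atTop (𝓝 0) := by
    simpa only [neg_mul, Function.comp_def] using
      tendsto_exp_atBot.comp (tendsto_neg_atTop_atBot.comp (hsinh.const_mul_atTop hx))
  simpa using hexp.neg.div_const x

lemma integrableOn_exp_neg_mul_sinh_mul_cosh {x : ℝ} (hx : 0 < x) (a : ℝ) :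
    IntegrableOn (fun t => exp (-x * sinh t) * cosh t) (Ioi a) :=
  integrableOn_Ioi_deriv_of_nonneg' (fun t _ => hasDerivAt_neg_exp_neg_mul_sinh_div hx.ne' t)
    (fun t _ => by positivity) (tendsto_neg_exp_neg_mul_sinh_div_atTop hx)

lemma integral_exp_neg_mul_sinh_mul_cosh {x : ℝ} (hx : 0 < x) (a : ℝ) :
    ∫ t in Ioi a, exp (-x * sinh t) * cosh t = exp (-x * sinh a) / x := by
  rw [integral_Ioi_of_hasDerivAt_of_nonneg'
    (fun t _ => hasDerivAt_neg_exp_neg_mul_sinh_div hx.ne' t)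
    (fun t _ => by positivity) (tendsto_neg_exp_neg_mul_sinh_div_atTop hx)]
  ring

lemma integrableOn_exp_neg_mul_cosh_mul_cosh {x : ℝ} (hx : 0 < x) (a : ℝ) :
    IntegrableOn (fun t => exp (-x * cosh t) * cosh t) (Ioi a) := by
  refine (integrableOn_exp_neg_mul_sinh_mul_cosh hx a).mono' (by fun_prop) ?_
  filter_upwards with t
  rw [norm_of_nonneg (by positivity)]
  exact mul_le_mul_of_nonneg_right (exp_neg_mul_cosh_le_exp_neg_mul_sinh hx.le t) (cosh_pos t).le

lemma besselK1_pos {x : ℝ} (hx : 0 < x) : 0 < besselK1 x := by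
  rw [besselK1, setIntegral_pos_iff_support_of_nonneg_ae
    (ae_of_all _ fun t => by positivity) (integrableOn_exp_neg_mul_cosh_mul_cosh hx 0)]
  have hsupp : Function.support (fun t => exp (-x * cosh t) * cosh t) = univ :=
    Function.support_eq_univ fun t => by positivity
  rw [hsupp, univ_inter, volume_Ioi]
  simp

lemma besselK1_le_exp_neg_mul_one_add_inv {x : ℝ} (hx : 0 < x) :
    besselK1 x ≤ exp (-x) * (1 + x⁻¹) := by
  set a := arsinh 1
  have ha : 0 ≤ a := arsinh_nonneg_iff.2 zero_le_one
  have hsinh_a : sinh a = 1 := sinh_arsinh 1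
  have hint := integrableOn_exp_neg_mul_cosh_mul_cosh hx 0
  have hsplit : besselK1 x = (∫ t in Ioc 0 a, exp (-x * cosh t) * cosh t)
      + ∫ t in Ioi a, exp (-x * cosh t) * cosh t := by
    rw [besselK1, ← Ioc_union_Ioi_eq_Ioi ha, setIntegral_union (Ioc_disjoint_Ioi le_rfl)
      measurableSet_Ioi (hint.mono_set Ioc_subset_Ioi_self) (hint.mono_set (Ioi_subset_Ioi ha))]
  have hnear : ∫ t in Ioc 0 a, exp (-x * cosh t) * cosh t ≤ exp (-x) := calc
    _ ≤ ∫ t in Ioc 0 a, exp (-x) * cosh t := by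
      refine setIntegral_mono_on (hint.mono_set Ioc_subset_Ioi_self)
        (by fun_prop : Continuous fun t => exp (-x) * cosh t).integrableOn_Ioc measurableSet_Ioc
        fun t _ => mul_le_mul_of_nonneg_right ?_ (cosh_pos t).le
      rw [exp_le_exp, neg_mul, neg_le_neg_iff]
      exact le_mul_of_one_le_right hx.le (one_le_cosh t)
    _ = exp (-x) := by
      rw [← intervalIntegral.integral_of_le ha, intervalIntegral.integral_const_mul,
        intervalIntegral.integral_eq_sub_of_hasDerivAt (fun t _ => hasDerivAt_sinh t)
          (continuous_cosh.intervalIntegrable _ _), hsinh_a, sinh_zero, sub_zero, mul_one]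
  have hfar : ∫ t in Ioi a, exp (-x * cosh t) * cosh t ≤ exp (-x) / x := calc
    _ ≤ ∫ t in Ioi a, exp (-x * sinh t) * cosh t :=
      setIntegral_mono_on (hint.mono_set (Ioi_subset_Ioi ha))
        (integrableOn_exp_neg_mul_sinh_mul_cosh hx a) measurableSet_Ioi fun t _ =>
          mul_le_mul_of_nonneg_right (exp_neg_mul_cosh_le_exp_neg_mul_sinh hx.le t) (cosh_pos t).le
    _ = exp (-x) / x := by rw [integral_exp_neg_mul_sinh_mul_cosh hx, hsinh_a, mul_one]
  rw [hsplit, mul_add, mul_one, ← div_eq_mul_inv]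
  exact add_le_add hnear hfar

lemma factorial_two_mul_add_one_le (k : ℕ) : (2 * k + 1)! ≤ 4 ^ k * (k ! * (k + 1)!) := by
  have h := Nat.choose_mul_factorial_mul_factorial (show k ≤ 2 * k + 1 by omega)
  rw [show 2 * k + 1 - k = k + 1 by omega, mul_assoc] at h
  rw [← h]
  exact Nat.mul_le_mul_right _ (Nat.choose_middle_le_pow k)

lemma besselI1_term_le {x : ℝ} (hx : 0 ≤ x) (k : ℕ) :
    (x / 2) ^ (2 * k + 1) / ((k ! : ℝ) * ((k + 1)! : ℝ)) ≤
      x ^ (2 * k + 1) / (2 * k + 1)! / 2 := by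
  have hfact : ((2 * k + 1)! : ℝ) * 2 ≤ 2 ^ (2 * k + 1) * (k ! * (k + 1)!) := by
    have h : ((2 * k + 1)! : ℝ) ≤ 4 ^ k * (k ! * (k + 1)!) := by
      exact_mod_cast factorial_two_mul_add_one_le k
    rw [pow_succ, pow_mul, show (2 : ℝ) ^ 2 = 4 by norm_num]
    linarith
  rw [div_pow, div_div, div_div]
  exact div_le_div_of_nonneg_left (by positivity) (by positivity) hfact

lemma summable_besselI1_series {x : ℝ} (hx : 0 ≤ x) :
    Summable fun k : ℕ => (x / 2) ^ (2 * k + 1) / ((k ! : ℝ) * ((k + 1)! : ℝ)) :=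
  .of_nonneg_of_le (fun _ => by positivity) (besselI1_term_le hx)
    ((hasSum_sinh x).div_const 2).summable

lemma besselI1_pos {x : ℝ} (hx : 0 < x) : 0 < besselI1 x :=
  (summable_besselI1_series hx.le).tsum_pos (fun _ => by positivity) 0 (by positivity)

lemma besselI1_le_sinh_div_two {x : ℝ} (hx : 0 ≤ x) : besselI1 x ≤ sinh x / 2 := by
  rw [besselI1, ← ((hasSum_sinh x).div_const 2).tsum_eq]
  exact (summable_besselI1_series hx).tsum_le_tsum (besselI1_term_le hx)
    ((hasSum_sinh x).div_const 2).summable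

lemma one_sub_lt_one_add_mul_exp_neg_two_mul {q : ℝ} (hq : 0 < q) :
    1 - q < (1 + q) * exp (-(2 * q)) := by
  set F : ℝ → ℝ := fun t => (1 + t) * exp (-(2 * t)) + t
  have hF : ∀ t, HasDerivAt F (1 - (1 + 2 * t) * exp (-(2 * t))) t := by
    intro t
    refine ((((hasDerivAt_id' t).const_add 1).mul
      ((hasDerivAt_id' t).const_mul 2).neg.exp).add (hasDerivAt_id' t)).congr_deriv ?_
    simp only [Pi.neg_apply]
    ring
  have hmono : StrictMonoOn F (Ici 0) := by
    refine strictMonoOn_of_deriv_pos (convex_Ici 0)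
      (continuous_iff_continuousAt.2 fun t => (hF t).continuousAt).continuousOn fun t ht => ?_
    rw [interior_Ici, mem_Ioi] at ht
    rw [(hF t).deriv, sub_pos]
    have h := add_one_lt_exp (by positivity : 2 * t ≠ 0)
    have he : exp (2 * t) * exp (-(2 * t)) = 1 := by rw [← exp_add, add_neg_cancel, exp_zero]
    nlinarith [exp_pos (-(2 * t))]
  have := hmono self_mem_Ici hq.le hq
  simp only [F, add_zero, one_mul, mul_zero, neg_zero, exp_zero] at this
  linarith

lemma sinh_mul_exp_neg (x : ℝ) : sinh x * exp (-x) = (1 - exp (-(2 * x))) / 2 := by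
  rw [sinh_eq, div_mul_eq_mul_div, sub_mul, ← exp_add, ← exp_add, add_neg_cancel, exp_zero]
  ring_nf

lemma sinh_div_two_mul_exp_neg_mul_one_add_inv_lt {q : ℝ} (hq : 0 < q) :
    sinh q / 2 * (exp (-q) * (1 + q⁻¹)) < 1 / 2 := by
  have hkey := one_sub_lt_one_add_mul_exp_neg_two_mul hq
  rw [← mul_assoc, div_mul_eq_mul_div, sinh_mul_exp_neg]
  field_simp
  nlinarith

/-- for all q > 0, 0 < G(q) < 1/2. -/
theorem Gdiag_mem_Ioo : ∀ q : ℝ, 0 < q → 0 < Gdiag q ∧ Gdiag q < 1 / 2 := by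
  intro q hq
  refine ⟨mul_pos (besselI1_pos hq) (besselK1_pos hq), ?_⟩
  calc Gdiag q ≤ sinh q / 2 * (exp (-q) * (1 + q⁻¹)) :=
        mul_le_mul (besselI1_le_sinh_div_two hq.le) (besselK1_le_exp_neg_mul_one_add_inv hq)
          (besselK1_pos hq).le (by have := sinh_pos_iff.2 hq; positivity)
    _ < 1 / 2 := sinh_div_two_mul_exp_neg_mul_one_add_inv_lt hq
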